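/- For all Borel sets E, D ⊆ ∂F, one has η_A((E × D) ∩ ∂²F) ≥ μ_A(E)·μ_A(D). -/

import Mathlib

open MeasureTheory Filter Topology
open scoped ENNReal NNReal

namespace FGC

noncomputable section

variable (k : ℕ)

/-- The alphabet `A = Σ ∪ Σ⁻¹`: a letter is a basis element together with a sign. -/
abbrev L := Fin k × Bool

/-- The inverse of a letter. -/
def linv (a : L k) : L k := (a.1, !a.2)

/-- A right-infinite word is (freely) reduced if no letter is followed by its inverse. -/
def Red (x : ℕ → L k) : Prop := ∀ n, x (n + 1) ≠ linv k (x n)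

/-- The boundary `∂F`: the set of infinite freely reduced words in the alphabet `A`. -/
def Boundary : Type := { x : ℕ → L k // Red k x }

instance : TopologicalSpace (Boundary k) :=
  inferInstanceAs (TopologicalSpace { x : ℕ → L k // Red k x })

instance : MeasurableSpace (Boundary k) := borel _

instance : BorelSpace (Boundary k) := ⟨rfl⟩

/-- The free group of rank `k`. -/
abbrev F := FreeGroup (Fin k)

/-- The word length `|v|` of an element of `F`. -/
def wordLength (v : F k) : ℕ := v.toWord.length

/-- The cyclically reduced length `‖v‖`: the minimal word length among conjugates of `v`. -/
def cyclLength (v : F k) : ℕ := sInf { n | ∃ g : F k, wordLength k (g * v * g⁻¹) = n }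

/-- The cylinder `Cyl v ⊆ ∂F` of rays starting with the reduced word of `v`. -/
def Cyl (v : F k) : Set (Boundary k) :=
  { x | ∀ i : Fin v.toWord.length, x.1 i = v.toWord.get i }

/-- The shift deleting the first letter of a ray. -/
def shift (x : ℕ → L k) : ℕ → L k := fun n => x (n + 1)

/-- Prepending a letter to a ray. -/
def cons (a : L k) (x : ℕ → L k) : ℕ → L k
  | 0 => a
  | n + 1 => x n

/-- Prepending a (reversed) finite word to a ray, performing free reduction. -/
def prependAux : List (L k) → (ℕ → L k) → ℕ → L k
  | [], x => x
  | a :: r, x => prependAux r (if x 0 = linv k a then shift k x else cons k a x)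

theorem red_shift {x : ℕ → L k} (hx : Red k x) : Red k (shift k x) :=
  fun n => hx (n + 1)

theorem red_cons {a : L k} {x : ℕ → L k} (hx : Red k x) (h : x 0 ≠ linv k a) :
    Red k (cons k a x) := by
  intro n
  cases n with
  | zero => exact h
  | succ m => exact hx m

theorem red_prependAux : ∀ (r : List (L k)) {x : ℕ → L k}, Red k x → Red k (prependAux k r x)
  | [], _, hx => hx
  | a :: r, x, hx => by
    by_cases h : x 0 = linv k a
    · simp only [prependAux, if_pos h]
      exact red_prependAux r (red_shift k hx)
    · simp only [prependAux, if_neg h]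
      exact red_prependAux r (red_cons k hx h)

/-- The left-translation action of `F` on `∂F`: concatenate and freely reduce. -/
def act (g : F k) (x : Boundary k) : Boundary k :=
  ⟨prependAux k g.toWord.reverse x.1, red_prependAux k _ x.2⟩

/-- The shift map `T : ∂F → ∂F`. -/
def Tmap (x : Boundary k) : Boundary k := ⟨shift k x.1, red_shift k x.2⟩

/-- The double boundary `∂²F`, as the complement of the diagonal. -/
def D2 : Set (Boundary k × Boundary k) := { p | p.1 ≠ p.2 }

/-- The diagonal action of `F` on `∂F × ∂F`. -/
def actPair (g : F k) (p : Boundary k × Boundary k) : Boundary k × Boundary k :=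
  (act k g p.1, act k g p.2)

/-- The cylinder `Cyl[1,w]` of geodesics through the segment from `1` to `w`. -/
def baseCyl (w : F k) : Set (Boundary k × Boundary k) :=
  { p | p.1.1 0 ≠ p.2.1 0 ∧ p.2 ∈ Cyl k w }

/-- The base-ball `B = Cyl[1,1]` of geodesics through the base point. -/
def baseBall : Set (Boundary k × Boundary k) := baseCyl k 1

/-- The cylinder `Cyl[x,y] = x · Cyl[1, x⁻¹y]`. -/
def Cyl2 (x y : F k) : Set (Boundary k × Boundary k) :=
  actPair k x '' baseCyl k (x⁻¹ * y)

/-- A geodesic current: a Borel measure on `∂F × ∂F` giving no mass to the diagonal,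
invariant under the diagonal `F`-action, and finite on compact subsets of `∂²F`. -/
def IsCurrent (η : Measure (Boundary k × Boundary k)) : Prop :=
  η { p | p.1 = p.2 } = 0 ∧
  (∀ g : F k, ∀ W : Set (Boundary k × Boundary k), MeasurableSet W →
    η (actPair k g ⁻¹' W) = η W) ∧
  (∀ K : Set (Boundary k × Boundary k), K ⊆ D2 k → IsCompact K → η K < ⊤)

/-- The element of `F` given by the first `n` letters of a ray. -/
def prefixEl (x : Boundary k) (n : ℕ) : F k :=
  FreeGroup.mk (List.ofFn fun i : Fin n => x.1 i)

/-- `b : ∂F → ∂F` is the boundary extension of the automorphism `Φ`: for every ray `x`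
and every `m`, the length-`m` prefix of `b x` is the length-`m` prefix of the reduced
word of `Φ (x|_n)` for all sufficiently large `n`. -/
def IsBdryExt (Φ : F k ≃* F k) (b : Boundary k → Boundary k) : Prop :=
  ∀ x : Boundary k, ∀ m : ℕ, ∃ N : ℕ, ∀ n ≥ N,
    (Φ (prefixEl k x n)).toWord.take m = List.ofFn fun i : Fin m => (b x).1 i

/-- The map `∂Φ × ∂Φ` on pairs. -/
def pairMap (b : Boundary k → Boundary k) (p : Boundary k × Boundary k) :
    Boundary k × Boundary k := (b p.1, b p.2)

/-- The length of an automorphism with boundary map `b`, w.r.t. the current `η`: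
`L(Φ) = η((∂Φ × ∂Φ)⁻¹ B)`. -/
def autLen (η : Measure (Boundary k × Boundary k)) (b : Boundary k → Boundary k) : ℝ≥0∞ :=
  η (pairMap k b ⁻¹' baseBall k)

/-- The subgroup of inner automorphisms. -/
abbrev Inn : Subgroup (MulAut (F k)) := (MulAut.conj : F k →* MulAut (F k)).range

/-- `Out(F) = Aut(F)/Inn(F)` as a coset space. -/
abbrev OutQ := MulAut (F k) ⧸ Inn k

/-- A simple automorphism: induced by a permutation of the basis, or inner. -/
def SimpleAut (Φ : MulAut (F k)) : Prop :=
  (∃ σ : Equiv.Perm (Fin k), ∀ i, Φ (FreeGroup.of i) = FreeGroup.of (σ i)) ∨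
  (∃ v : F k, ∀ x, Φ x = v * x * v⁻¹)

/-- A Whitehead automorphism of the second kind. -/
def Whitehead2 (τ : MulAut (F k)) : Prop :=
  ∃ a : Fin k, ∀ i : Fin k,
    τ (FreeGroup.of i) = FreeGroup.of i ∨
    τ (FreeGroup.of i) = FreeGroup.of i * FreeGroup.of a ∨
    τ (FreeGroup.of i) = (FreeGroup.of a)⁻¹ * FreeGroup.of i ∨
    τ (FreeGroup.of i) = (FreeGroup.of a)⁻¹ * FreeGroup.of i * FreeGroup.of a

/-- The space of frequency measures: finite `T`-invariant Borel measures on `∂F`. -/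
def FreqM : Type :=
  { μ : Measure (Boundary k) //
    IsFiniteMeasure μ ∧ ∀ W : Set (Boundary k), MeasurableSet W → μ (Tmap k ⁻¹' W) = μ W }

/-- The space of geodesic currents. -/
def Currents : Type := { η : Measure (Boundary k × Boundary k) // IsCurrent k η }

/-- Continuous functions on `∂F × ∂F` with compact support contained in `∂²F`;
these are the test functions for the weak-* topology on currents. -/
def TestF : Type :=
  { φ : Boundary k × Boundary k → ℝ //
    Continuous φ ∧ IsCompact (tsupport φ) ∧ tsupport φ ⊆ D2 k }

/-- The weak-* topology on frequency measures. -/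
instance : TopologicalSpace (FreqM k) :=
  ⨅ φ : C(Boundary k, ℝ),
    TopologicalSpace.induced (fun μ : FreqM k => ∫ x, φ x ∂μ.1) inferInstance

/-- The weak-* topology on geodesic currents. -/
instance : TopologicalSpace (Currents k) :=
  ⨅ φ : TestF k,
    TopologicalSpace.induced (fun η : Currents k => ∫ p, φ.1 p ∂η.1) inferInstance

/-- Convergence of a sequence of group elements (as reduced words) to a boundary ray. -/
def WordTendsto (pn : ℕ → F k) (p : Boundary k) : Prop :=
  ∀ m : ℕ, ∃ N : ℕ, ∀ n ≥ N, (pn n).toWord.take m = List.ofFn fun i : Fin m => p.1 i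

/-- The length of the maximal common initial segment of two rays. -/
def commonLen (p : Boundary k × Boundary k) : ℕ :=
  sSup { m : ℕ | ∀ i < m, p.1.1 i = p.2.1 i }

/-- A single letter as an element of `F`. -/
def el (a : L k) : F k := FreeGroup.mk [a]

/-- The product of per-letter constants over the reduced word of `w`. -/
def Cprod (C : L k → ℝ≥0) (w : F k) : ℝ≥0 := (w.toWord.map C).prod


/-!
Split `∂²F` according to where the two rays part: for a reduced word `v` and letters `a ≠ b`,
the piece `Cyl(va) × Cyl(vb)`. Inside this piece, a rectangle `Cyl(vau) × Cyl(vbw)` is exactly the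
current cylinder `Cyl[vau, vbw]`, so `η_A` gives it the mass `μ_A(Cyl((au)⁻¹bw))` of a cylinder of
length `|u| + |w| + 2`, while `μ_A ⊗ μ_A` gives it `(2k-1) / (2k (2k-1)^(2|v|)) ≤ 1` times as much.
Rectangles of cylinders form a generating π-system, so on each piece `μ_A ⊗ μ_A` is this constant
multiple of `η_A`. For `k ≥ 2` the measure `μ_A` has no atoms, so `μ_A ⊗ μ_A` does not charge the
diagonal, and summing over the pieces gives `μ_A ⊗ μ_A ≤ η_A` on `∂²F`.
-/

open FreeGroup hiding IsReduced Red

variable {k}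

variable (k) in
def ray (l : List (L k)) (x : ℕ → L k) : ℕ → L k := l.foldr (cons k) x

variable (k) in
def CylL (l : List (L k)) : Set (Boundary k) :=
  { x | ∀ (i : ℕ) (hi : i < l.length), x.1 i = l[i] }

section Words

@[simp] theorem linv_linv (a : L k) : linv k (linv k a) = a := by simp [linv]

theorem ne_linv_iff {a b : L k} : b ≠ linv k a ↔ (a.1 = b.1 → a.2 = b.2) := by
  obtain ⟨i, s⟩ := a
  obtain ⟨j, t⟩ := b
  cases s <;> cases t <;> simp [linv, eq_comm]

theorem isReduced_pair {a b : L k} : FreeGroup.IsReduced [a, b] ↔ b ≠ linv k a := by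
  simp [FreeGroup.IsReduced, ne_linv_iff]

theorem isReduced_append_singleton_iff {l : List (L k)} {a d : L k}
    (h : FreeGroup.IsReduced (l ++ [a])) :
    FreeGroup.IsReduced (l ++ [a] ++ [d]) ↔ d ≠ linv k a :=
  ⟨fun h' => isReduced_pair.1 (h'.infix ⟨l, [], by simp⟩),
    fun hd => h.append_overlap (isReduced_pair.2 hd) (by simp)⟩

theorem invRev_singleton (a : L k) : invRev [a] = [linv k a] := rfl

theorem append_invRev_cons (v m : List (L k)) (c : L k) :
    v ++ invRev (c :: m) = v ++ invRev m ++ [linv k c] := by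
  rw [invRev_cons, invRev_singleton, List.append_assoc]

theorem isReduced_invRev {l : List (L k)} (hl : FreeGroup.IsReduced l) :
    FreeGroup.IsReduced (invRev l) := by
  rw [FreeGroup.IsReduced, invRev, List.isChain_reverse, List.isChain_map]
  exact hl.imp fun a b h e => by simpa using (h e.symm).symm

theorem isReduced_invRev_cons_append {a b : L k} {u w : List (L k)}
    (hu : FreeGroup.IsReduced (a :: u)) (hw : FreeGroup.IsReduced (b :: w)) (hab : a ≠ b) :
    FreeGroup.IsReduced (invRev (a :: u) ++ b :: w) := by
  have hu' := isReduced_invRev hu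
  rw [invRev_cons, invRev_singleton] at hu' ⊢
  exact hu'.append_overlap
    (List.isChain_cons_cons.2 ⟨ne_linv_iff.1 (by rw [linv_linv]; exact hab.symm), hw⟩)
    (List.cons_ne_nil _ _)

theorem isReduced_append_invRev_cons_append_singleton_iff {v m : List (L k)} {c d : L k}
    (h : FreeGroup.IsReduced (v ++ invRev (c :: m))) :
    FreeGroup.IsReduced (v ++ invRev (c :: m) ++ [d]) ↔ d ≠ c := by
  rw [append_invRev_cons] at h ⊢
  rw [isReduced_append_singleton_iff h, linv_linv]

theorem mk_inv_mul_mk (v l l' : List (L k)) :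
    (mk (v ++ l))⁻¹ * mk (v ++ l') = mk (invRev l ++ l') := by
  simp only [← mul_mk, mul_inv_rev, ← inv_mk]
  group

end Words

section Rays

@[simp] theorem ray_nil (x : ℕ → L k) : ray k [] x = x := rfl

@[simp] theorem ray_cons (a : L k) (l : List (L k)) (x : ℕ → L k) :
    ray k (a :: l) x = cons k a (ray k l x) := rfl

theorem ray_append (l l' : List (L k)) (x : ℕ → L k) :
    ray k (l ++ l') x = ray k l (ray k l' x) := List.foldr_append

theorem ray_apply_lt (l : List (L k)) (x : ℕ → L k) {n : ℕ} (hn : n < l.length) :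
    ray k l x n = l[n] := by
  induction l generalizing n with
  | nil => simp at hn
  | cons a l ih => cases n with
    | zero => rfl
    | succ n => exact ih (by simpa using hn)

theorem ray_apply_length_add (l : List (L k)) (x : ℕ → L k) (n : ℕ) :
    ray k l x (l.length + n) = x n := by
  induction l with
  | nil => simp
  | cons a l ih => rw [List.length_cons, Nat.add_right_comm]; exact ih

theorem head?_append_singleton_eq_ray (l : List (L k)) (x : ℕ → L k) :
    (l ++ [x 0]).head? = some (ray k l x 0) := by
  cases l <;> rfl

theorem red_cons_iff {a : L k} {x : ℕ → L k} : Red k (cons k a x) ↔ x 0 ≠ linv k a ∧ Red k x :=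
  ⟨fun h => ⟨h 0, fun n => h (n + 1)⟩, fun h => red_cons k h.2 h.1⟩

theorem red_ray_iff {l : List (L k)} {x : ℕ → L k} :
    Red k (ray k l x) ↔ FreeGroup.IsReduced (l ++ [x 0]) ∧ Red k x := by
  induction l with
  | nil => simp [FreeGroup.IsReduced.singleton]
  | cons a l ih =>
    rw [ray_cons, red_cons_iff, ih, List.cons_append]
    unfold FreeGroup.IsReduced
    simp only [List.isChain_cons, head?_append_singleton_eq_ray, Option.mem_def,
      Option.some.injEq, forall_eq', ne_linv_iff, and_assoc]

theorem mem_CylL_iff {l : List (L k)} {x : Boundary k} : x ∈ CylL k l ↔ ∃ y, x.1 = ray k l y := by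
  refine ⟨fun h => ⟨fun n => x.1 (l.length + n), funext fun n => ?_⟩, ?_⟩
  · rcases lt_or_ge n l.length with hn | hn
    · rw [ray_apply_lt l _ hn, h n hn]
    · obtain ⟨j, rfl⟩ := Nat.exists_eq_add_of_le hn
      rw [ray_apply_length_add]
  · rintro ⟨y, hy⟩ i hi
    rw [hy, ray_apply_lt l y hi]

theorem Cyl_mk {l : List (L k)} (hl : FreeGroup.IsReduced l) : Cyl k (mk l) = CylL k l := by
  ext x
  simp [Cyl, CylL, toWord_mk, hl.reduce_eq, Fin.forall_iff]

end Rays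

section Action

theorem prependAux_append (r s : List (L k)) (x : ℕ → L k) :
    prependAux k (r ++ s) x = prependAux k s (prependAux k r x) := by
  induction r generalizing x with
  | nil => rfl
  | cons a r ih => exact ih _

theorem prependAux_reverse_of_red {l : List (L k)} {x : ℕ → L k} (h : Red k (ray k l x)) :
    prependAux k l.reverse x = ray k l x := by
  induction l with
  | nil => rfl
  | cons a l ih =>
    rw [ray_cons, red_cons_iff] at h
    rw [List.reverse_cons, prependAux_append, ih h.2, ray_cons]
    simp only [prependAux, if_neg h.1]

theorem prependAux_reverse_ray_invRev (m : List (L k)) (y : ℕ → L k) :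
    prependAux k m.reverse (ray k (invRev m) y) = y := by
  induction m generalizing y with
  | nil => rfl
  | cons a m ih =>
    rw [List.reverse_cons, prependAux_append, invRev_cons, ray_append, ih, invRev_singleton,
      ray_cons, ray_nil]
    simp only [prependAux, cons, if_true]
    rfl

theorem act_mk_val_of_red {l : List (L k)} {x : Boundary k} (h : Red k (ray k l x.1)) :
    (act k (mk l) x).1 = ray k l x.1 := by
  have hl : FreeGroup.IsReduced l := (red_ray_iff.1 h).1.infix ⟨[], [x.1 0], by simp⟩
  simp only [act, toWord_mk, hl.reduce_eq]
  exact prependAux_reverse_of_red h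

theorem act_mk_append_val {v m : List (L k)} {y : ℕ → L k} {x : Boundary k}
    (hvm : FreeGroup.IsReduced (v ++ m)) (hy : Red k (ray k v y))
    (hx : x.1 = ray k (invRev m) y) :
    (act k (mk (v ++ m)) x).1 = ray k v y := by
  simp only [act, toWord_mk, hvm.reduce_eq, List.reverse_append, prependAux_append, hx,
    prependAux_reverse_ray_invRev]
  exact prependAux_reverse_of_red hy

end Action

section Geodesics

variable {v m n : List (L k)} {c : L k}

theorem Cyl2_mk_subset_prod (hx : FreeGroup.IsReduced (v ++ invRev (c :: m)))
    (hy : FreeGroup.IsReduced (v ++ n)) (hmn : FreeGroup.IsReduced (c :: m ++ n)) (hn : n ≠ []) :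
    Cyl2 k (mk (v ++ invRev (c :: m))) (mk (v ++ n)) ⊆
      CylL k (v ++ invRev (c :: m)) ×ˢ CylL k (v ++ n) := by
  rintro _ ⟨⟨p, q⟩, ⟨hpq, hq⟩, rfl⟩
  rw [mk_inv_mul_mk, invRev_invRev, Cyl_mk hmn] at hq
  obtain ⟨z, hz⟩ := mem_CylL_iff.1 hq
  have hqz := q.2
  rw [hz, red_ray_iff] at hqz
  refine ⟨mem_CylL_iff.2 ⟨p.1, act_mk_val_of_red (red_ray_iff.2 ⟨?_, p.2⟩)⟩,
    mem_CylL_iff.2 ⟨z, ?_⟩⟩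
  · rw [isReduced_append_invRev_cons_append_singleton_iff hx]
    rwa [hz] at hpq
  · rw [ray_append]
    refine act_mk_append_val hx ?_ (by rw [hz, invRev_invRev, ray_append])
    rw [← ray_append, red_ray_iff]
    exact ⟨hy.append_overlap (hqz.1.infix ⟨c :: m, [], by simp⟩) hn, hqz.2⟩

theorem prod_subset_Cyl2_mk (hx : FreeGroup.IsReduced (v ++ invRev (c :: m)))
    (hmn : FreeGroup.IsReduced (c :: m ++ n)) (hn : n ≠ []) :
    CylL k (v ++ invRev (c :: m)) ×ˢ CylL k (v ++ n) ⊆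
      Cyl2 k (mk (v ++ invRev (c :: m))) (mk (v ++ n)) := by
  rintro ⟨P, Q⟩ ⟨hP, hQ⟩
  obtain ⟨y₁, hy₁⟩ := mem_CylL_iff.1 hP
  obtain ⟨y₂, hy₂⟩ := mem_CylL_iff.1 hQ
  have hP' := P.2
  rw [hy₁, red_ray_iff] at hP'
  have hQ' := Q.2
  rw [hy₂, red_ray_iff] at hQ'
  have hq : Red k (ray k (c :: m ++ n) y₂) :=
    red_ray_iff.2 ⟨hmn.append_overlap (hQ'.1.infix ⟨v, [], by simp⟩) hn, hQ'.2⟩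
  refine ⟨(⟨y₁, hP'.2⟩, ⟨_, hq⟩), ⟨(isReduced_append_invRev_cons_append_singleton_iff hx).1 hP'.1,
    ?_⟩, Prod.ext (Subtype.ext ?_) (Subtype.ext ?_)⟩
  · rw [mk_inv_mul_mk, invRev_invRev, Cyl_mk hmn]
    exact mem_CylL_iff.2 ⟨y₂, rfl⟩
  · rw [hy₁]
    exact act_mk_val_of_red (hy₁ ▸ P.2)
  · rw [hy₂]
    refine (act_mk_append_val (y := ray k n y₂) hx ?_ ?_).trans (ray_append v n y₂).symm
    · rw [← ray_append, ← hy₂]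
      exact Q.2
    · show ray k (c :: m ++ n) y₂ = _
      rw [invRev_invRev, ray_append]

theorem Cyl2_mk_append_cons {u w : List (L k)} {a b : L k} (hab : a ≠ b)
    (hu : FreeGroup.IsReduced (v ++ a :: u)) (hw : FreeGroup.IsReduced (v ++ b :: w)) :
    Cyl2 k (mk (v ++ a :: u)) (mk (v ++ b :: w)) = CylL k (v ++ a :: u) ×ˢ CylL k (v ++ b :: w) := by
  obtain ⟨c, m, hcm⟩ := List.exists_cons_of_ne_nil (l := invRev (a :: u)) (by simp [invRev])
  have hmn := isReduced_invRev_cons_append (hu.infix (List.suffix_append _ _).isInfix)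
    (hw.infix (List.suffix_append _ _).isInfix) hab
  rw [← invRev_invRev (L₁ := a :: u), hcm] at hu ⊢
  rw [hcm] at hmn
  exact (Cyl2_mk_subset_prod hu hw hmn (List.cons_ne_nil _ _)).antisymm
    (prod_subset_Cyl2_mk hu hmn (List.cons_ne_nil _ _))

end Geodesics

section Cylinders

theorem isReduced_ofFn (x : Boundary k) (n : ℕ) :
    FreeGroup.IsReduced (List.ofFn fun i : Fin n => x.1 i) :=
  List.isChain_ofFn.2 fun i _ => ne_linv_iff.1 (x.2 i)

theorem mem_CylL_ofFn (x : Boundary k) (n : ℕ) : x ∈ CylL k (List.ofFn fun i : Fin n => x.1 i) :=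
  fun i hi => by simp

theorem eq_ofFn_of_mem_CylL {l : List (L k)} {x : Boundary k} {n : ℕ} (h : x ∈ CylL k l)
    (hn : l.length = n) : l = List.ofFn fun i : Fin n => x.1 i :=
  List.ext_getElem (by simp [hn]) fun i hi _ => by simp [h i hi]

theorem ofFn_succ_eq_append (x : ℕ → L k) (n : ℕ) :
    (List.ofFn fun i : Fin (n + 1) => x i) = (List.ofFn fun i : Fin n => x i) ++ [x n] := by
  rw [List.ofFn_succ', List.concat_eq_append]
  simp

theorem ofFn_firstDiff_eq (x y : ℕ → L k) :
    (List.ofFn fun i : Fin (PiNat.firstDiff x y) => x i) =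
      List.ofFn fun i : Fin (PiNat.firstDiff x y) => y i :=
  List.ofFn_inj.2 (funext fun i => PiNat.apply_eq_of_lt_firstDiff i.2)

theorem mem_CylL_append_singleton {l : List (L k)} {a : L k} {x : Boundary k} :
    x ∈ CylL k (l ++ [a]) ↔ x ∈ CylL k l ∧ x.1 l.length = a := by
  refine ⟨fun h => ⟨fun i hi => ?_, ?_⟩, fun ⟨h, ha⟩ i hi => ?_⟩
  · rw [h i (by simp; omega), List.getElem_append_left hi]
  · rw [h l.length (by simp), List.getElem_concat_length rfl]
  · rcases (Nat.lt_succ_iff_lt_or_eq.1 (by simpa using hi)) with hi | rfl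
    · rw [h i hi, List.getElem_append_left hi]
    · rw [ha, List.getElem_concat_length rfl]

@[simp] theorem CylL_nil : CylL k ([] : List (L k)) = Set.univ := by
  ext x
  simp [CylL]

theorem CylL_subset_of_prefix {l m : List (L k)} (h : l <+: m) : CylL k m ⊆ CylL k l :=
  fun x hx i hi => by rw [hx i (hi.trans_le h.length_le), h.getElem hi]

theorem prefix_of_mem_CylL {l m : List (L k)} {x : Boundary k} (hl : x ∈ CylL k l)
    (hm : x ∈ CylL k m) (hle : l.length ≤ m.length) : l <+: m := by
  rw [List.prefix_iff_eq_take]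
  exact List.ext_getElem (by simp [hle]) fun i h₁ h₂ => by
    rw [List.getElem_take, ← hl i h₁, hm i (h₁.trans_le hle)]

theorem CylL_inter_CylL_cases (l m : List (L k)) :
    CylL k l ∩ CylL k m = ∅ ∨ (l <+: m ∧ CylL k l ∩ CylL k m = CylL k m) ∨
      (m <+: l ∧ CylL k l ∩ CylL k m = CylL k l) := by
  by_cases hlm : l <+: m
  · exact Or.inr (Or.inl ⟨hlm, Set.inter_eq_right.2 (CylL_subset_of_prefix hlm)⟩)
  by_cases hml : m <+: l
  · exact Or.inr (Or.inr ⟨hml, Set.inter_eq_left.2 (CylL_subset_of_prefix hml)⟩)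
  refine Or.inl (Set.eq_empty_of_forall_notMem fun x ⟨hl, hm⟩ => ?_)
  rcases le_total l.length m.length with hle | hle
  · exact hlm (prefix_of_mem_CylL hl hm hle)
  · exact hml (prefix_of_mem_CylL hm hl hle)

theorem CylL_inter_CylL_append_singleton {l v : List (L k)} {a : L k}
    (hl : FreeGroup.IsReduced l) (hva : FreeGroup.IsReduced (v ++ [a])) :
    CylL k l ∩ CylL k (v ++ [a]) = ∅ ∨
      ∃ u, FreeGroup.IsReduced (v ++ a :: u) ∧ CylL k l ∩ CylL k (v ++ [a]) = CylL k (v ++ a :: u) := by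
  rcases CylL_inter_CylL_cases l (v ++ [a]) with h | ⟨-, h⟩ | ⟨⟨u, rfl⟩, h⟩
  · exact Or.inl h
  · exact Or.inr ⟨[], hva, h⟩
  · exact Or.inr ⟨u, by simpa using hl, by simpa using h⟩

end Cylinders

section Measurability

instance : SecondCountableTopology (Boundary k) :=
  Topology.IsEmbedding.subtypeVal.secondCountableTopology

instance : T2Space (Boundary k) := inferInstanceAs (T2Space { x : ℕ → L k // Red k x })

theorem isOpen_CylL (l : List (L k)) : IsOpen (CylL k l) := by
  have : CylL k l = ⋂ i : Fin l.length, (fun x : Boundary k => x.1 i) ⁻¹' {l[i]} := by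
    ext x
    simp [CylL, Fin.forall_iff]
  rw [this]
  exact isOpen_iInter_of_finite fun i =>
    ((continuous_apply _).comp continuous_subtype_val).isOpen_preimage _ (isOpen_discrete _)

theorem measurableSet_CylL (l : List (L k)) : MeasurableSet (CylL k l) :=
  (isOpen_CylL l).measurableSet

variable (k) in
def cylinders : Set (Set (Boundary k)) := { S | ∃ l, FreeGroup.IsReduced l ∧ S = CylL k l }

theorem isTopologicalBasis_cylinders : TopologicalSpace.IsTopologicalBasis (cylinders k) := by
  refine TopologicalSpace.isTopologicalBasis_of_isOpen_of_nhds
    (by rintro _ ⟨l, -, rfl⟩; exact isOpen_CylL l) fun x u hx hu => ?_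
  obtain ⟨V, hV, rfl⟩ := isOpen_induced_iff.1 hu
  obtain ⟨_, ⟨y, n, rfl⟩, hxy, hyV⟩ :=
    (PiNat.isTopologicalBasis_cylinders fun _ : ℕ => L k).exists_subset_of_mem_open hx hV
  refine ⟨_, ⟨_, isReduced_ofFn x n, rfl⟩, mem_CylL_ofFn x n, fun z hz => hyV fun i hi => ?_⟩
  rw [← hxy i hi, hz i (by simpa using hi), List.getElem_ofFn]

theorem borel_eq_generateFrom_cylinders :
    (inferInstance : MeasurableSpace (Boundary k)) =
      MeasurableSpace.generateFrom (cylinders k) :=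
  BorelSpace.measurable_eq.trans isTopologicalBasis_cylinders.borel_eq_generateFrom

theorem isCountablySpanning_cylinders : IsCountablySpanning (cylinders k) :=
  ⟨fun _ => Set.univ, fun _ => ⟨[], FreeGroup.IsReduced.nil, CylL_nil.symm⟩, Set.iUnion_const _⟩

theorem prod_eq_generateFrom_rectangles :
    (inferInstance : MeasurableSpace (Boundary k × Boundary k)) =
      MeasurableSpace.generateFrom (Set.image2 (· ×ˢ ·) (cylinders k) (cylinders k)) := by
  rw [← generateFrom_prod_eq isCountablySpanning_cylinders isCountablySpanning_cylinders,
    ← borel_eq_generateFrom_cylinders]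

theorem inter_mem_cylinders {S S' : Set (Boundary k)} (hS : S ∈ cylinders k)
    (hS' : S' ∈ cylinders k) (hne : (S ∩ S').Nonempty) : S ∩ S' ∈ cylinders k := by
  obtain ⟨l, hl, rfl⟩ := hS
  obtain ⟨l', hl', rfl⟩ := hS'
  rcases CylL_inter_CylL_cases l l' with h | ⟨-, h⟩ | ⟨-, h⟩
  · exact absurd h hne.ne_empty
  · exact ⟨l', hl', h⟩
  · exact ⟨l, hl, h⟩

theorem isPiSystem_rectangles :
    IsPiSystem (Set.image2 (· ×ˢ ·) (cylinders k) (cylinders k)) := by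
  rintro _ ⟨A, hA, B, hB, rfl⟩ _ ⟨A', hA', B', hB', rfl⟩ hne
  rw [Set.prod_inter_prod] at hne ⊢
  obtain ⟨hA₀, hB₀⟩ := Set.prod_nonempty_iff.1 hne
  exact ⟨_, inter_mem_cylinders hA hA' hA₀, _, inter_mem_cylinders hB hB' hB₀, rfl⟩

theorem _root_.MeasureTheory.Measure.prod_diagonal_eq_zero {α : Type*} [MeasurableSpace α]
    [MeasurableEq α] (μ : Measure α) [SFinite μ] [NullSingletonClass μ] :
    μ.prod μ (Set.diagonal α) = 0 := by
  rw [Measure.prod_apply measurableSet_diagonal]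
  simp [Set.preimage, Set.diagonal]

theorem measure_prod_compl_D2 (μ : Measure (Boundary k)) [SFinite μ] [NullSingletonClass μ] :
    μ.prod μ (D2 k)ᶜ = 0 := by
  rw [← Measure.prod_diagonal_eq_zero μ]
  congr 1
  ext
  simp [D2]

end Measurability

variable (k) in
@[ext] structure Fork where
  stem : List (L k)
  left : L k
  right : L k
  isReduced_left : FreeGroup.IsReduced (stem ++ [left])
  isReduced_right : FreeGroup.IsReduced (stem ++ [right])
  left_ne_right : left ≠ right

namespace Fork

open PiNat

instance : Countable (Fork k) :=
  Function.Injective.countable (f := fun t : Fork k => (t.stem, t.left, t.right))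
    fun t t' h => by
      simp only [Prod.mk.injEq] at h
      exact Fork.ext h.1 h.2.1 h.2.2

def cyl (t : Fork k) : Set (Boundary k × Boundary k) :=
  CylL k (t.stem ++ [t.left]) ×ˢ CylL k (t.stem ++ [t.right])

theorem measurableSet_cyl (t : Fork k) : MeasurableSet t.cyl :=
  (measurableSet_CylL _).prod (measurableSet_CylL _)

def ofNe {p : Boundary k × Boundary k} (hp : p ∈ D2 k) : Fork k where
  stem := List.ofFn fun i : Fin (firstDiff p.1.1 p.2.1) => p.1.1 i
  left := p.1.1 (firstDiff p.1.1 p.2.1)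
  right := p.2.1 (firstDiff p.1.1 p.2.1)
  isReduced_left := ofFn_succ_eq_append p.1.1 _ ▸ isReduced_ofFn p.1 _
  isReduced_right := by
    rw [ofFn_firstDiff_eq, ← ofFn_succ_eq_append]
    exact isReduced_ofFn p.2 _
  left_ne_right := apply_firstDiff_ne fun h => hp (Subtype.ext h)

theorem cyl_subset_D2 (t : Fork k) : t.cyl ⊆ D2 k := fun p hp h => by
  obtain ⟨h₁, h₂⟩ := hp
  rw [mem_CylL_append_singleton] at h₁ h₂
  exact t.left_ne_right (by rw [← h₁.2, ← h₂.2, h])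

theorem mem_cyl_ofNe {p : Boundary k × Boundary k} (hp : p ∈ D2 k) : p ∈ (ofNe hp).cyl := by
  refine ⟨mem_CylL_append_singleton.2 ⟨mem_CylL_ofFn _ _, by simp [ofNe]⟩,
    mem_CylL_append_singleton.2 ⟨?_, by simp [ofNe]⟩⟩
  show p.2 ∈ CylL k (List.ofFn fun i : Fin (firstDiff p.1.1 p.2.1) => p.1.1 i)
  rw [ofFn_firstDiff_eq]
  exact mem_CylL_ofFn _ _

theorem eq_ofNe {t : Fork k} {p : Boundary k × Boundary k} (h : p ∈ t.cyl) :
    t = ofNe (t.cyl_subset_D2 h) := by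
  have hne : p.1.1 ≠ p.2.1 := fun e => t.cyl_subset_D2 h (Subtype.ext e)
  obtain ⟨h₁, h₂⟩ := h
  rw [mem_CylL_append_singleton] at h₁ h₂
  have hlen : t.stem.length = firstDiff p.1.1 p.2.1 := by
    refine le_antisymm (not_lt.1 fun hlt => apply_firstDiff_ne hne ?_)
      (not_lt.1 fun hlt => t.left_ne_right ?_)
    · rw [h₁.1 _ hlt, h₂.1 _ hlt]
    · rw [← h₁.2, ← h₂.2]
      exact apply_eq_of_lt_firstDiff hlt
  refine Fork.ext (eq_ofFn_of_mem_CylL h₁.1 hlen) ?_ ?_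
  · show t.left = p.1.1 (firstDiff p.1.1 p.2.1)
    rw [← hlen, h₁.2]
  · show t.right = p.2.1 (firstDiff p.1.1 p.2.1)
    rw [← hlen, h₂.2]

theorem iUnion_cyl : ⋃ t : Fork k, t.cyl = D2 k :=
  Set.Subset.antisymm (Set.iUnion_subset cyl_subset_D2)
    fun _ hp => Set.mem_iUnion.2 ⟨_, mem_cyl_ofNe hp⟩

theorem pairwise_disjoint_cyl : Pairwise (Function.onFun Disjoint (cyl (k := k))) :=
  fun _ _ hne => Set.disjoint_left.2 fun _ h h' => hne ((eq_ofNe h).trans (eq_ofNe h').symm)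

theorem measure_inter_D2 (ν : Measure (Boundary k × Boundary k))
    {S : Set (Boundary k × Boundary k)} (hS : MeasurableSet S) :
    ν (S ∩ D2 k) = ∑' t : Fork k, ν (S ∩ t.cyl) := by
  rw [← iUnion_cyl, Set.inter_iUnion, measure_iUnion
    (fun _ _ h => (pairwise_disjoint_cyl h).mono Set.inter_subset_right Set.inter_subset_right)
    fun t => hS.inter t.measurableSet_cyl]

end Fork

variable (k) in
/-- The `μ_A`-mass of a cylinder of length `n + 1`. -/
def cylMass (n : ℕ) : ℝ≥0∞ := ((2 * k : ℝ≥0∞) * (2 * k - 1) ^ n)⁻¹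

variable (k) in
/-- The density of `μ_A ⊗ μ_A` with respect to `η_A` on the pairs of rays parting after `n`
letters. -/
def forkWeight (n : ℕ) : ℝ≥0∞ := (2 * k - 1) * cylMass k (2 * n)

section Mass

theorem two_mul_sub_one_eq_natCast : (2 * k - 1 : ℝ≥0∞) = ((2 * k - 1 : ℕ) : ℝ≥0∞) := by
  rw [ENNReal.natCast_sub]
  push_cast
  rfl

theorem one_le_two_mul_sub_one (hk : 1 ≤ k) : (1 : ℝ≥0∞) ≤ 2 * k - 1 := by
  rw [two_mul_sub_one_eq_natCast]
  exact_mod_cast (by omega : 1 ≤ 2 * k - 1)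

theorem cylMass_eq (hk : 1 ≤ k) (n : ℕ) :
    cylMass k n = (2 * k : ℝ≥0∞)⁻¹ * (2 * k - 1 : ℝ≥0∞)⁻¹ ^ n := by
  rw [cylMass, ENNReal.mul_inv (Or.inl (by exact_mod_cast (by omega : 2 * k ≠ 0)))
    (Or.inl (by exact_mod_cast ENNReal.natCast_ne_top (2 * k))), ENNReal.inv_pow]

theorem cylMass_mul_cylMass (hk : 1 ≤ k) (m p q : ℕ) :
    cylMass k (m + p) * cylMass k (m + q) = forkWeight k m * cylMass k (p + q + 1) := by
  have hr : (2 * k - 1 : ℝ≥0∞) * (2 * k - 1 : ℝ≥0∞)⁻¹ = 1 :=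
    ENNReal.mul_inv_cancel (zero_lt_one.trans_le (one_le_two_mul_sub_one hk)).ne'
      (two_mul_sub_one_eq_natCast (k := k) ▸ ENNReal.natCast_ne_top _)
  simp only [forkWeight, cylMass_eq hk]
  set c := (2 * k : ℝ≥0∞)⁻¹
  set s := (2 * k - 1 : ℝ≥0∞)⁻¹
  calc c * s ^ (m + p) * (c * s ^ (m + q)) = 1 * (c * s ^ (2 * m)) * (c * s ^ (p + q)) := by ring
    _ = (2 * k - 1) * s * (c * s ^ (2 * m)) * (c * s ^ (p + q)) := by rw [hr]
    _ = _ := by ring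

theorem forkWeight_le_one (hk : 1 ≤ k) (n : ℕ) : forkWeight k n ≤ 1 := by
  rw [forkWeight, cylMass, ← div_eq_mul_inv]
  refine ENNReal.div_le_of_le_mul ?_
  rw [one_mul]
  calc (2 * k - 1 : ℝ≥0∞) = (2 * k - 1) * 1 := (mul_one _).symm
    _ ≤ 2 * k * (2 * k - 1) ^ (2 * n) :=
      mul_le_mul' tsub_le_self (one_le_pow₀ (one_le_two_mul_sub_one hk))

theorem tendsto_cylMass (hk : 2 ≤ k) : Tendsto (cylMass k) atTop (𝓝 0) := by
  have hs : (2 * k - 1 : ℝ≥0∞)⁻¹ < 1 := by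
    rw [ENNReal.inv_lt_one, two_mul_sub_one_eq_natCast]
    exact_mod_cast (by omega : 1 < 2 * k - 1)
  simpa [funext (cylMass_eq (k := k) (by omega))] using
    ENNReal.Tendsto.const_mul (ENNReal.tendsto_pow_atTop_nhds_zero_of_lt_one hs)
      (Or.inr (ENNReal.inv_ne_top.2 (by exact_mod_cast (by omega : 2 * k ≠ 0))))

end Mass

section Measures

variable {μ : Measure (Boundary k)}

theorem measure_CylL (hμ : ∀ v : F k, v ≠ 1 → μ (Cyl k v) = cylMass k (wordLength k v - 1))
    {l : List (L k)} (hl : FreeGroup.IsReduced l) (hne : l ≠ []) :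
    μ (CylL k l) = cylMass k (l.length - 1) := by
  have h1 : mk l ≠ 1 := fun h => hne (by rw [← hl.reduce_eq, ← toWord_mk, h, toWord_one])
  rw [← Cyl_mk hl, hμ _ h1, wordLength, toWord_mk, hl.reduce_eq]

theorem nullSingletonClass_of_measure_Cyl (hk : 2 ≤ k)
    (hμ : ∀ v : F k, v ≠ 1 → μ (Cyl k v) = cylMass k (wordLength k v - 1)) :
    NullSingletonClass μ where
  measure_singleton z := le_antisymm (ge_of_tendsto' (tendsto_cylMass hk) fun n => by
    calc μ {z} ≤ μ (CylL k (List.ofFn fun i : Fin (n + 1) => z.1 i)) :=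
          measure_mono (Set.singleton_subset_iff.2 (mem_CylL_ofFn z _))
      _ = cylMass k n := by
        rw [measure_CylL hμ (isReduced_ofFn z _) (by simp)]
        simp) bot_le

theorem measure_prod_CylL_append_cons [SFinite μ]
    (hμ : ∀ v : F k, v ≠ 1 → μ (Cyl k v) = cylMass k (wordLength k v - 1))
    {v u w : List (L k)} {a b : L k} (hu : FreeGroup.IsReduced (v ++ a :: u))
    (hw : FreeGroup.IsReduced (v ++ b :: w)) :
    μ.prod μ (CylL k (v ++ a :: u) ×ˢ CylL k (v ++ b :: w)) =
      cylMass k (v.length + u.length) * cylMass k (v.length + w.length) := by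
  rw [Measure.prod_prod, measure_CylL hμ hu (by simp), measure_CylL hμ hw (by simp)]
  simp

variable {η : Measure (Boundary k × Boundary k)}

theorem measure_CylL_prod_CylL_of_Cyl2
    (hμ : ∀ v : F k, v ≠ 1 → μ (Cyl k v) = cylMass k (wordLength k v - 1))
    (hη : ∀ x y : F k, η (Cyl2 k x y) = μ (Cyl k (x⁻¹ * y)))
    {v u w : List (L k)} {a b : L k} (hab : a ≠ b) (hu : FreeGroup.IsReduced (v ++ a :: u))
    (hw : FreeGroup.IsReduced (v ++ b :: w)) :
    η (CylL k (v ++ a :: u) ×ˢ CylL k (v ++ b :: w)) = cylMass k (u.length + w.length + 1) := by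
  have hZ := isReduced_invRev_cons_append (hu.infix (List.suffix_append _ _).isInfix)
    (hw.infix (List.suffix_append _ _).isInfix) hab
  rw [← Cyl2_mk_append_cons hab hu hw, hη, mk_inv_mul_mk, Cyl_mk hZ, measure_CylL hμ hZ (by simp)]
  simp [invRev_length, Nat.add_right_comm]

theorem Fork.measure_prod_rectangle_inter_cyl [SFinite μ] (hk : 1 ≤ k)
    (hμ : ∀ v : F k, v ≠ 1 → μ (Cyl k v) = cylMass k (wordLength k v - 1))
    (hη : ∀ x y : F k, η (Cyl2 k x y) = μ (Cyl k (x⁻¹ * y)))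
    (t : Fork k) {lu lw : List (L k)} (hlu : FreeGroup.IsReduced lu)
    (hlw : FreeGroup.IsReduced lw) :
    μ.prod μ (CylL k lu ×ˢ CylL k lw ∩ t.cyl) =
      forkWeight k t.stem.length * η (CylL k lu ×ˢ CylL k lw ∩ t.cyl) := by
  rw [cyl, Set.prod_inter_prod]
  rcases CylL_inter_CylL_append_singleton hlu t.isReduced_left with h₁ | ⟨u, hu, h₁⟩
  · simp [h₁]
  rcases CylL_inter_CylL_append_singleton hlw t.isReduced_right with h₂ | ⟨w, hw, h₂⟩
  · simp [h₂]
  rw [h₁, h₂, measure_prod_CylL_append_cons hμ hu hw,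
    measure_CylL_prod_CylL_of_Cyl2 hμ hη t.left_ne_right hu hw, cylMass_mul_cylMass hk]

theorem Fork.prod_restrict_cyl [IsFiniteMeasure μ] (hk : 1 ≤ k)
    (hμ : ∀ v : F k, v ≠ 1 → μ (Cyl k v) = cylMass k (wordLength k v - 1))
    (hη : ∀ x y : F k, η (Cyl2 k x y) = μ (Cyl k (x⁻¹ * y))) (t : Fork k) :
    (μ.prod μ).restrict t.cyl = forkWeight k t.stem.length • η.restrict t.cyl := by
  refine ext_of_generate_finite _ prod_eq_generateFrom_rectangles isPiSystem_rectangles ?_ ?_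
  · rintro _ ⟨_, ⟨lu, hlu, rfl⟩, _, ⟨lw, hlw, rfl⟩, rfl⟩
    have hR := (measurableSet_CylL lu).prod (measurableSet_CylL lw)
    rw [Measure.smul_apply, Measure.restrict_apply hR, Measure.restrict_apply hR, smul_eq_mul,
      t.measure_prod_rectangle_inter_cyl hk hμ hη hlu hlw]
  · simpa using t.measure_prod_rectangle_inter_cyl hk hμ hη FreeGroup.IsReduced.nil
      FreeGroup.IsReduced.nil

end Measures

theorem product_lower_bound_general (k : ℕ) (hk : 2 ≤ k)
    (μA : Measure (Boundary k)) [IsProbabilityMeasure μA]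
    (hμA : ∀ v : F k, v ≠ 1 →
      μA (Cyl k v) = ((2 * k : ℝ≥0∞) * (2 * k - 1) ^ (wordLength k v - 1))⁻¹)
    (ηA : Measure (Boundary k × Boundary k))
    (hηA' : ∀ x y : F k, ηA (Cyl2 k x y) = μA (Cyl k (x⁻¹ * y)))
    (E D : Set (Boundary k)) (hE : MeasurableSet E) (hD : MeasurableSet D) :
    μA E * μA D ≤ ηA ((E ×ˢ D) ∩ D2 k) := by
  have : NullSingletonClass μA := nullSingletonClass_of_measure_Cyl hk hμA
  have hED : MeasurableSet (E ×ˢ D) := hE.prod hD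
  calc μA E * μA D = μA.prod μA (E ×ˢ D ∩ D2 k) := by
        rw [measure_inter_conull (measure_prod_compl_D2 μA), Measure.prod_prod]
    _ = ∑' t : Fork k, forkWeight k t.stem.length * ηA (E ×ˢ D ∩ t.cyl) := by
        rw [Fork.measure_inter_D2 _ hED]
        refine tsum_congr fun t => ?_
        rw [← Measure.restrict_apply hED, t.prod_restrict_cyl (by omega) hμA hηA',
          Measure.smul_apply, Measure.restrict_apply hED, smul_eq_mul]
    _ ≤ ∑' t : Fork k, ηA (E ×ˢ D ∩ t.cyl) :=
        ENNReal.tsum_le_tsum fun t => mul_le_of_le_one_left' (forkWeight_le_one (by omega) _)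
    _ = ηA (E ×ˢ D ∩ D2 k) := (Fork.measure_inter_D2 _ hED).symm

theorem product_lower_bound (k : ℕ) (hk : 2 ≤ k)
    (μA : Measure (Boundary k)) [IsProbabilityMeasure μA]
    (hμA : ∀ v : F k, v ≠ 1 →
      μA (Cyl k v) = ((2 * k : ℝ≥0∞) * (2 * k - 1) ^ (wordLength k v - 1))⁻¹)
    (ηA : Measure (Boundary k × Boundary k)) (hηA : IsCurrent k ηA)
    (hηA' : ∀ x y : F k, ηA (Cyl2 k x y) = μA (Cyl k (x⁻¹ * y)))
    (E D : Set (Boundary k)) (hE : MeasurableSet E) (hD : MeasurableSet D) :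
    μA E * μA D ≤ ηA ((E ×ˢ D) ∩ D2 k) :=
  product_lower_bound_general k hk μA hμA ηA hηA' E D hE hD

end

end FGC
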